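/- For the Kirk–Silber realization ẋ₁ = x₁[1−|x|²+ε(x₃²+x₄²)−ηx₂²], ẋ₂ = x₂[1−|x|²+εx₁²−η(x₃²+x₄²)], ẋ₃ = x₃[1−|x|²+εx₂²−η(x₁²+x₄²)], ẋ₄ = x₄[1−|x|²+εx₂²−η(x₁²+x₃²)] with 0 < ε < 1, η > 0, the four unit coordinate vectors e₁, e₂, e₃, e₄ are equilibria, and on the invariant subspace Q₂ = {x₁ = 0}, the function Φ₂ defined by tan Φ₂ = x₂²/(x₃²+x₄²) satisfies dΦ₂/dt = −2x₂² [ε(x₃²+x₄²)x₂² + η(x₃⁴+x₄⁴)] / [x₂⁴ + (x₃²+x₄²)²] ≤ 0, with equality only when x₂ = 0 or x₃ = x₄ = 0. -/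

import Mathlib

open Real

theorem HasDerivAt.arctan_div {u v : ℝ → ℝ} {u' v' t : ℝ} (hu : HasDerivAt u u' t)
    (hv : HasDerivAt v v' t) (hvt : v t ≠ 0) :
    HasDerivAt (fun s => Real.arctan (u s / v s))
      ((u' * v t - u t * v') / (u t ^ 2 + v t ^ 2)) t := by
  refine (hu.div hv hvt).arctan.congr_deriv ?_
  rw [Pi.div_apply]
  field_simp
  ring

def kirkSilber (ε η : ℝ) (x : Fin 4 → ℝ) : Fin 4 → ℝ :=
  ![x 0 * (1 - (∑ i, (x i) ^ 2) + ε * ((x 2) ^ 2 + (x 3) ^ 2) - η * (x 1) ^ 2),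
    x 1 * (1 - (∑ i, (x i) ^ 2) + ε * (x 0) ^ 2 - η * ((x 2) ^ 2 + (x 3) ^ 2)),
    x 2 * (1 - (∑ i, (x i) ^ 2) + ε * (x 1) ^ 2 - η * ((x 0) ^ 2 + (x 3) ^ 2)),
    x 3 * (1 - (∑ i, (x i) ^ 2) + ε * (x 1) ^ 2 - η * ((x 0) ^ 2 + (x 2) ^ 2))]

theorem kirkSilber_single (ε η : ℝ) (i : Fin 4) : kirkSilber ε η (Pi.single i 1) = 0 := by
  funext j
  fin_cases i <;> fin_cases j <;> simp [kirkSilber, Fin.sum_univ_four]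

/-- `dΦ₂/dt` on `Q₂`, with `a, b, c` standing for `x₂, x₃, x₄`. -/
noncomputable def phiRate (ε η a b c : ℝ) : ℝ :=
  -2 * a ^ 2 * (ε * (b ^ 2 + c ^ 2) * a ^ 2 + η * (b ^ 4 + c ^ 4)) /
    (a ^ 4 + (b ^ 2 + c ^ 2) ^ 2)

theorem phiRate_nonpos {ε η : ℝ} (hε : 0 ≤ ε) (hη : 0 ≤ η) (a b c : ℝ) :
    phiRate ε η a b c ≤ 0 := by
  unfold phiRate
  apply div_nonpos_of_nonpos_of_nonneg _ (by positivity)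
  have : 0 ≤ a ^ 2 * (ε * (b ^ 2 + c ^ 2) * a ^ 2 + η * (b ^ 4 + c ^ 4)) := by positivity
  linarith

theorem phiRate_eq_zero_iff {ε η : ℝ} (hε : 0 ≤ ε) (hη : 0 < η) {a b c : ℝ} :
    phiRate ε η a b c = 0 ↔ a = 0 ∨ (b = 0 ∧ c = 0) := by
  constructor
  · intro h
    by_contra! hne
    obtain ⟨ha, hbc⟩ := hne
    have hb4c4 : 0 < b ^ 4 + c ^ 4 := by
      by_cases hb : b = 0
      · have := hbc hb; positivity
      · positivity
    have hnum : 0 < a ^ 2 * (ε * (b ^ 2 + c ^ 2) * a ^ 2 + η * (b ^ 4 + c ^ 4)) := by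
      positivity
    have hden : 0 < a ^ 4 + (b ^ 2 + c ^ 2) ^ 2 := by positivity
    unfold phiRate at h
    rw [div_eq_zero_iff] at h
    rcases h with h | h <;> linarith
  · rintro (rfl | ⟨rfl, rfl⟩) <;> simp [phiRate]

/-- In the quotient rule for `x₂² / (x₃² + x₄²)` the radial factor `1 - |x|²` cancels. -/
theorem kirkSilber_hasDerivAt_phi {ε η t : ℝ} {x : ℝ → Fin 4 → ℝ} (hx0 : x t 0 = 0)
    (hx : ∀ m, HasDerivAt (fun s => x s m) (kirkSilber ε η (x t) m) t)
    (hv : (x t 2) ^ 2 + (x t 3) ^ 2 ≠ 0) :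
    HasDerivAt (fun s => arctan ((x s 1) ^ 2 / ((x s 2) ^ 2 + (x s 3) ^ 2)))
      (phiRate ε η (x t 1) (x t 2) (x t 3)) t := by
  refine (HasDerivAt.arctan_div ((hx 1).pow 2) (((hx 2).pow 2).add ((hx 3).pow 2)) hv
    ).congr_deriv ?_
  have hden : (x t 1 ^ 2) ^ 2 + (x t 2 ^ 2 + x t 3 ^ 2) ^ 2 ≠ 0 := by positivity
  simp only [phiRate, kirkSilber, Fin.sum_univ_four, hx0, Pi.pow_apply, Pi.add_apply,
    Matrix.cons_val]
  rw [div_eq_div_iff hden (by positivity)]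
  ring

theorem KS_realization_general (ε η : ℝ) (hε : 0 < ε) (hη : 0 < η)
    (f : (Fin 4 → ℝ) → (Fin 4 → ℝ))
    (hf : ∀ x : Fin 4 → ℝ,
      f x 0 = x 0 * (1 - (∑ i, (x i) ^ 2) + ε * ((x 2) ^ 2 + (x 3) ^ 2) - η * (x 1) ^ 2) ∧
      f x 1 = x 1 * (1 - (∑ i, (x i) ^ 2) + ε * (x 0) ^ 2 - η * ((x 2) ^ 2 + (x 3) ^ 2)) ∧
      f x 2 = x 2 * (1 - (∑ i, (x i) ^ 2) + ε * (x 1) ^ 2 - η * ((x 0) ^ 2 + (x 3) ^ 2)) ∧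
      f x 3 = x 3 * (1 - (∑ i, (x i) ^ 2) + ε * (x 1) ^ 2 - η * ((x 0) ^ 2 + (x 2) ^ 2))) :
    (∀ i : Fin 4, f (Pi.single i 1) = 0) ∧
    (∀ x : ℝ → Fin 4 → ℝ,
      (∀ t : ℝ, x t 0 = 0) →
      (∀ t : ℝ, ∀ m : Fin 4, HasDerivAt (fun s => x s m) (f (x t) m) t) →
      ∀ Φ : ℝ → ℝ,
        (∀ t, Φ t = arctan ((x t 1) ^ 2 / ((x t 2) ^ 2 + (x t 3) ^ 2))) →
        ∀ t : ℝ, (x t 2) ^ 2 + (x t 3) ^ 2 ≠ 0 →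
          HasDerivAt Φ
            (-2 * (x t 1) ^ 2 *
              (ε * ((x t 2) ^ 2 + (x t 3) ^ 2) * (x t 1) ^ 2 + η * ((x t 2) ^ 4 + (x t 3) ^ 4)) /
              ((x t 1) ^ 4 + ((x t 2) ^ 2 + (x t 3) ^ 2) ^ 2)) t ∧
          (-2 * (x t 1) ^ 2 *
              (ε * ((x t 2) ^ 2 + (x t 3) ^ 2) * (x t 1) ^ 2 + η * ((x t 2) ^ 4 + (x t 3) ^ 4)) /
              ((x t 1) ^ 4 + ((x t 2) ^ 2 + (x t 3) ^ 2) ^ 2) ≤ 0) ∧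
          (-2 * (x t 1) ^ 2 *
              (ε * ((x t 2) ^ 2 + (x t 3) ^ 2) * (x t 1) ^ 2 + η * ((x t 2) ^ 4 + (x t 3) ^ 4)) /
              ((x t 1) ^ 4 + ((x t 2) ^ 2 + (x t 3) ^ 2) ^ 2) = 0 →
            x t 1 = 0 ∨ (x t 2 = 0 ∧ x t 3 = 0))) := by
  have hf_eq : f = kirkSilber ε η := by
    funext x m
    obtain ⟨h0, h1, h2, h3⟩ := hf x
    fin_cases m <;> simpa [kirkSilber]
  subst hf_eq
  refine ⟨kirkSilber_single ε η, fun x hx0 hx Φ hΦ t hv => ?_⟩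
  rw [show Φ = _ from funext hΦ]
  exact ⟨kirkSilber_hasDerivAt_phi (hx0 t) (hx t) hv, phiRate_nonpos hε.le hη.le _ _ _,
    fun h => (phiRate_eq_zero_iff hε.le hη).mp h⟩

/-- For the Kirk–Silber realization on ℝ⁴ (coordinates `x 0,…,x 3`
standing for `x₁,…,x₄`), the unit coordinate vectors are equilibria, and on the
invariant subspace `Q₂ = {x₁ = 0}` the function `Φ₂` with
`tan Φ₂ = x₂²/(x₃²+x₄²)` satisfies
`dΦ₂/dt = −2x₂²[ε(x₃²+x₄²)x₂² + η(x₃⁴+x₄⁴)]/[x₂⁴+(x₃²+x₄²)²] ≤ 0`,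
with equality only when `x₂ = 0` or `x₃ = x₄ = 0`. -/
theorem KS_realization (ε η : ℝ) (hε : 0 < ε) (hε1 : ε < 1) (hη : 0 < η)
    (f : (Fin 4 → ℝ) → (Fin 4 → ℝ))
    (hf : ∀ x : Fin 4 → ℝ,
      f x 0 = x 0 * (1 - (∑ i, (x i) ^ 2) + ε * ((x 2) ^ 2 + (x 3) ^ 2) - η * (x 1) ^ 2) ∧
      f x 1 = x 1 * (1 - (∑ i, (x i) ^ 2) + ε * (x 0) ^ 2 - η * ((x 2) ^ 2 + (x 3) ^ 2)) ∧
      f x 2 = x 2 * (1 - (∑ i, (x i) ^ 2) + ε * (x 1) ^ 2 - η * ((x 0) ^ 2 + (x 3) ^ 2)) ∧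
      f x 3 = x 3 * (1 - (∑ i, (x i) ^ 2) + ε * (x 1) ^ 2 - η * ((x 0) ^ 2 + (x 2) ^ 2))) :
    (∀ i : Fin 4, f (Pi.single i 1) = 0) ∧
    (∀ x : ℝ → Fin 4 → ℝ,
      (∀ t : ℝ, x t 0 = 0) →
      (∀ t : ℝ, ∀ m : Fin 4, HasDerivAt (fun s => x s m) (f (x t) m) t) →
      ∀ Φ : ℝ → ℝ,
        (∀ t, Φ t = arctan ((x t 1) ^ 2 / ((x t 2) ^ 2 + (x t 3) ^ 2))) →
        ∀ t : ℝ, (x t 2) ^ 2 + (x t 3) ^ 2 ≠ 0 →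
          HasDerivAt Φ
            (-2 * (x t 1) ^ 2 *
              (ε * ((x t 2) ^ 2 + (x t 3) ^ 2) * (x t 1) ^ 2 + η * ((x t 2) ^ 4 + (x t 3) ^ 4)) /
              ((x t 1) ^ 4 + ((x t 2) ^ 2 + (x t 3) ^ 2) ^ 2)) t ∧
          (-2 * (x t 1) ^ 2 *
              (ε * ((x t 2) ^ 2 + (x t 3) ^ 2) * (x t 1) ^ 2 + η * ((x t 2) ^ 4 + (x t 3) ^ 4)) /
              ((x t 1) ^ 4 + ((x t 2) ^ 2 + (x t 3) ^ 2) ^ 2) ≤ 0) ∧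
          (-2 * (x t 1) ^ 2 *
              (ε * ((x t 2) ^ 2 + (x t 3) ^ 2) * (x t 1) ^ 2 + η * ((x t 2) ^ 4 + (x t 3) ^ 4)) /
              ((x t 1) ^ 4 + ((x t 2) ^ 2 + (x t 3) ^ 2) ^ 2) = 0 →
            x t 1 = 0 ∨ (x t 2 = 0 ∧ x t 3 = 0))) :=
  KS_realization_general ε η hε hη f hf
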